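/- arXiv:1906.06176 — 3 statements merged into one kernel-verified Lean document; each statement's English description precedes it below -/
import Mathlib

section
/- Let J, K be finite sets with |J| = |K| = k, Z ∈ ℂ^{J×K}, and w = (w₁,…,w_d) nonnegative integers summing to k. Then per(Z) = (w₁!⋯w_d!/k!) · Σ over ordered weak partitions (V₁,…,V_d) of J of type w, and over ordered weak partitions (W₁,…,W_d) of K of type w, of Π_{r=1}^d per(Z[V_r, W_r]). -/
open Finset

set_option linter.unusedSectionVars false
set_option maxHeartbeats 1000000

/-- The permanent of the submatrix of `Z` with rows in `J` and columns in `K`,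
defined as a sum over bijections from `J` to `K` (it is `1` when `J = K = ∅`). -/
noncomputable def perSub {ι : Type*} [Fintype ι] [DecidableEq ι] (Z : Matrix ι ι ℂ) (J K : Finset ι) : ℂ :=
  ∑ f ∈ Finset.univ.filter (fun f : {x // x ∈ J} → {x // x ∈ K} => Function.Bijective f),
    ∏ j : {x // x ∈ J}, Z j.1 (f j).1

section
variable {ι : Type*} [Fintype ι] [DecidableEq ι] (Z : Matrix ι ι ℂ) {d : ℕ}

noncomputable def perAux {α β : Type*} [Fintype α] [Fintype β] [DecidableEq α] [DecidableEq β]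
    (u : α → ι) (v : β → ι) : ℂ :=
  ∑ e : α ≃ β, ∏ a, Z (u a) (v (e a))

lemma perSub_eq_perAux (J K : Finset ι) :
    perSub Z J K = perAux Z (Subtype.val : {x // x ∈ J} → ι) (Subtype.val : {x // x ∈ K} → ι) := by
  classical
  unfold perSub perAux
  refine Finset.sum_bij' (fun f hf => Equiv.ofBijective f (by simpa using hf))
    (fun e _ => ⇑e) (fun f hf => mem_univ _)
    (fun e _ => Finset.mem_filter.2 ⟨mem_univ _, e.bijective⟩) ?_ ?_ ?_
  · intro f hf; rfl
  · intro e he; ext a; rfl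
  · intro f hf; rfl

lemma perAux_comp {α β α' β' : Type*} [Fintype α] [Fintype β] [DecidableEq α] [DecidableEq β]
    [Fintype α'] [Fintype β'] [DecidableEq α'] [DecidableEq β']
    (u : α → ι) (v : β → ι) (e₁ : α' ≃ α) (e₂ : β' ≃ β) :
    perAux Z (u ∘ e₁) (v ∘ e₂) = perAux Z u v := by
  unfold perAux
  refine Fintype.sum_equiv (Equiv.equivCongr e₁ e₂) _ _ ?_
  intro f
  refine Fintype.prod_equiv e₁ _ _ ?_
  intro a
  simp [Equiv.equivCongr]

/-- Equivalences compatible with colorings correspond to families of fiberwise equivalences. -/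
def phiEquiv {α β : Type*} (c : α → Fin d) (c' : β → Fin d) :
    {e : α ≃ β // c ∘ ⇑e.symm = c'} ≃ (∀ r, {a // c a = r} ≃ {b // c' b = r}) where
  toFun e r := Equiv.subtypeEquiv e.1 (fun a => by
    have h := congrFun e.2 (e.1 a)
    simp only [Function.comp_apply, Equiv.symm_apply_apply] at h
    rw [h])
  invFun g := ⟨Equiv.ofFiberEquiv g, by
    funext b
    have h := Equiv.ofFiberEquiv_map g ((Equiv.ofFiberEquiv g).symm b)
    rw [Equiv.apply_symm_apply] at h
    exact h.symm⟩
  left_inv e := by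
    apply Subtype.ext; apply Equiv.ext; intro a; rfl
  right_inv g := by
    funext r; apply Equiv.ext; intro j
    apply Subtype.ext
    obtain ⟨a, ha⟩ := j
    subst ha
    rfl

lemma sum_fiber_split {α β : Type*} [Fintype α] [Fintype β] [DecidableEq α] [DecidableEq β]
    (u : α → ι) (v : β → ι) (c : α → Fin d) (c' : β → Fin d) :
    ∑ e : {e : α ≃ β // c ∘ ⇑e.symm = c'}, ∏ a, Z (u a) (v (e.1 a))
      = ∏ r, perAux Z (fun j : {a // c a = r} => u j.1) (fun j : {b // c' b = r} => v j.1) := by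
  unfold perAux
  rw [Fintype.prod_sum (fun r (g : {a // c a = r} ≃ {b // c' b = r}) =>
    ∏ j, Z (u j.1) (v ((g j).1)))]
  refine Fintype.sum_equiv (phiEquiv c c') _ _ ?_
  intro e
  rw [← Fintype.prod_fiberwise c (fun a => Z (u a) (v (e.1 a)))]
  rfl

lemma perAux_split {α β : Type*} [Fintype α] [Fintype β] [DecidableEq α] [DecidableEq β]
    (u : α → ι) (v : β → ι) (c : α → Fin d) :
    perAux Z u v = ∑ c' ∈ univ.filter (fun c' : β → Fin d =>
        ∀ r, (univ.filter fun b => c' b = r).card = (univ.filter fun a => c a = r).card),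
      ∏ r, perAux Z (fun j : {a // c a = r} => u j.1) (fun j : {b // c' b = r} => v j.1) := by
  calc perAux Z u v
      = ∑ c' : β → Fin d, ∑ e : {e : α ≃ β // c ∘ ⇑e.symm = c'},
          ∏ a, Z (u a) (v (e.1 a)) :=
        (Fintype.sum_fiberwise (fun e : α ≃ β => c ∘ ⇑e.symm)
          (fun e => ∏ a, Z (u a) (v (e a)))).symm
    _ = ∑ c' : β → Fin d, ∏ r, perAux Z (fun j : {a // c a = r} => u j.1)
          (fun j : {b // c' b = r} => v j.1) :=
        Finset.sum_congr rfl fun c' _ => sum_fiber_split Z u v c c'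
    _ = _ := by
        refine (Finset.sum_subset (filter_subset _ _) ?_).symm
        intro c' _ hc'
        simp only [mem_filter, mem_univ, true_and, not_forall] at hc'
        obtain ⟨r, hr⟩ := hc'
        refine Finset.prod_eq_zero (mem_univ r) ?_
        have : IsEmpty ({a // c a = r} ≃ {b // c' b = r}) := by
          refine ⟨fun g => hr ?_⟩
          rw [← Fintype.card_subtype, ← Fintype.card_subtype]
          exact (Fintype.card_congr g).symm
        unfold perAux
        rw [Finset.univ_eq_empty, Finset.sum_empty]

/-- Partitions as colorings. -/
def toV (J : Finset ι) (c : {x // x ∈ J} → Fin d) (r : Fin d) : Finset ι :=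
  (univ.filter fun j => c j = r).image Subtype.val

noncomputable def toC (hd : 1 ≤ d) (V : Fin d → Finset ι) (x : ι) : Fin d :=
  if h : ∃ r, x ∈ V r then h.choose else ⟨0, hd⟩

lemma toC_spec (hd : 1 ≤ d) (V : Fin d → Finset ι) {x : ι} (h : ∃ r, x ∈ V r) :
    x ∈ V (toC hd V x) := by
  unfold toC; rw [dif_pos h]; exact h.choose_spec

lemma toC_eq (hd : 1 ≤ d) {V : Fin d → Finset ι}
    (hdisj : ∀ r s, r ≠ s → Disjoint (V r) (V s)) {x : ι} {r : Fin d} (hx : x ∈ V r) :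
    toC hd V x = r := by
  by_contra hne
  exact Finset.disjoint_left.1 (hdisj _ _ hne) (toC_spec hd V ⟨r, hx⟩) hx

lemma toV_toC (hd : 1 ≤ d) {J : Finset ι} {V : Fin d → Finset ι}
    (hdisj : ∀ r s, r ≠ s → Disjoint (V r) (V s)) (hUnion : univ.biUnion V = J) :
    toV J (fun j : {x // x ∈ J} => toC hd V j.1) = V := by
  funext r
  ext x
  simp only [toV, mem_image, mem_filter, mem_univ, true_and]
  constructor
  · rintro ⟨j, hj, rfl⟩
    have hex : ∃ r', j.1 ∈ V r' := by
      have h2 : j.1 ∈ univ.biUnion V := by rw [hUnion]; exact j.2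
      simpa using h2
    have h3 := toC_spec hd V hex
    rwa [hj] at h3
  · intro hx
    have hxJ : x ∈ J := by
      rw [← hUnion]; exact mem_biUnion.2 ⟨r, mem_univ r, hx⟩
    exact ⟨⟨x, hxJ⟩, toC_eq hd hdisj hx, rfl⟩

lemma toV_disj {J : Finset ι} (c : {x // x ∈ J} → Fin d) :
    ∀ r s, r ≠ s → Disjoint (toV J c r) (toV J c s) := by
  intro r s hrs
  rw [toV, toV, Finset.disjoint_image Subtype.val_injective]
  refine Finset.disjoint_left.2 ?_
  intro j hj1 hj2
  simp only [mem_filter, mem_univ, true_and] at hj1 hj2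
  exact hrs (hj1 ▸ hj2 ▸ rfl)

lemma toV_biUnion {J : Finset ι} (c : {x // x ∈ J} → Fin d) :
    univ.biUnion (toV J c) = J := by
  ext x
  simp only [toV, mem_biUnion, mem_univ, true_and, mem_image, mem_filter]
  constructor
  · rintro ⟨r, j, _, rfl⟩; exact j.2
  · intro hx; exact ⟨c ⟨x, hx⟩, ⟨x, hx⟩, ⟨rfl, rfl⟩⟩

lemma toV_card {J : Finset ι} (c : {x // x ∈ J} → Fin d) (r : Fin d) :
    (toV J c r).card = (univ.filter fun j => c j = r).card :=
  Finset.card_image_of_injective _ Subtype.val_injective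

lemma toC_toV (hd : 1 ≤ d) {J : Finset ι} (c : {x // x ∈ J} → Fin d) (j : {x // x ∈ J}) :
    toC hd (toV J c) j.1 = c j := by
  refine toC_eq hd (toV_disj c) ?_
  exact mem_image.2 ⟨j, mem_filter.2 ⟨mem_univ _, rfl⟩, rfl⟩

lemma sum_partition (hd : 1 ≤ d) (K : Finset ι) (w : Fin d → ℕ)
    (F : (Fin d → Finset ι) → ℂ) :
    ∑ W ∈ (univ : Finset (Fin d → Finset ι)).filter
        (fun W => (∀ r s, r ≠ s → Disjoint (W r) (W s)) ∧
          univ.biUnion W = K ∧ ∀ r, (W r).card = w r), F W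
      = ∑ c ∈ (univ : Finset ({x // x ∈ K} → Fin d)).filter
          (fun c => ∀ r, (univ.filter fun j => c j = r).card = w r), F (toV K c) := by
  refine Finset.sum_bij' (fun V _ => fun j : {x // x ∈ K} => toC hd V j.1)
    (fun c _ => toV K c) ?_ ?_ ?_ ?_ ?_
  · intro V hV
    simp only [mem_filter, mem_univ, true_and] at hV ⊢
    obtain ⟨h1, h2, h3⟩ := hV
    intro r
    rw [← toV_card (fun j : {x // x ∈ K} => toC hd V j.1) r, toV_toC hd h1 h2]
    exact h3 r
  · intro c hc
    simp only [mem_filter, mem_univ, true_and] at hc ⊢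
    exact ⟨toV_disj c, toV_biUnion c, fun r => (toV_card c r).trans (hc r)⟩
  · intro V hV
    simp only [mem_filter, mem_univ, true_and] at hV
    exact toV_toC hd hV.1 hV.2.1
  · intro c _
    funext j
    exact toC_toV hd c j
  · intro V hV
    simp only [mem_filter, mem_univ, true_and] at hV
    rw [toV_toC hd hV.1 hV.2.1]

/-- The subtype of a `toV`-block is equivalent to the color fiber. -/
def fiberToV {J : Finset ι} (c : {x // x ∈ J} → Fin d) (r : Fin d) :
    {j : {x // x ∈ J} // c j = r} ≃ {x // x ∈ toV J c r} where
  toFun j := ⟨j.1.1, mem_image.2 ⟨j.1, mem_filter.2 ⟨mem_univ _, j.2⟩, rfl⟩⟩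
  invFun x := ⟨⟨x.1, by
      obtain ⟨j, hj, hval⟩ := mem_image.1 x.2
      exact hval ▸ j.2⟩, by
      obtain ⟨j, hj, hval⟩ := mem_image.1 x.2
      have hj' : c j = r := (mem_filter.1 hj).2
      suffices h : ∀ (y : {x // x ∈ J}), (y : ι) = x.1 → c y = r from h _ rfl
      intro y hy
      have hyj : y = j := Subtype.ext (hy.trans hval.symm)
      rw [hyj]
      exact hj'⟩
  left_inv j := Subtype.ext (Subtype.ext rfl)
  right_inv x := Subtype.ext rfl

lemma perSub_toV {J K : Finset ι} (c : {x // x ∈ J} → Fin d) (c' : {x // x ∈ K} → Fin d)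
    (r : Fin d) :
    perSub Z (toV J c r) (toV K c' r)
      = perAux Z (fun j : {j : {x // x ∈ J} // c j = r} => j.1.1)
          (fun j : {j : {x // x ∈ K} // c' j = r} => j.1.1) := by
  rw [perSub_eq_perAux]
  exact (perAux_comp Z _ _ (fiberToV c r) (fiberToV c' r)).symm

end

section
variable {d : ℕ}

lemma exists_coloring (γ : Type*) [Fintype γ] [DecidableEq γ] (k : ℕ)
    (h : Fintype.card γ = k) (w : Fin d → ℕ) (hw : ∑ r, w r = k) :
    ∃ c : γ → Fin d, ∀ r, (univ.filter fun g => c g = r).card = w r := by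
  have hcard : Fintype.card (Σ r, Fin (w r)) = Fintype.card γ := by
    simp [Fintype.card_sigma, hw, h]
  have e := Fintype.equivOfCardEq hcard
  refine ⟨fun g => (e.symm g).1, fun r => ?_⟩
  rw [← Fintype.card_subtype]
  have e1 : {g : γ // (e.symm g).1 = r} ≃ {x : Σ r', Fin (w r') // x.1 = r} :=
    Equiv.subtypeEquiv e.symm (fun g => Iff.rfl)
  have e2 : {x : Σ r', Fin (w r') // x.1 = r} ≃ Fin (w r) := {
    toFun := fun x => x.2 ▸ x.1.2
    invFun := fun y => ⟨⟨r, y⟩, rfl⟩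
    left_inv := by rintro ⟨⟨r', y⟩, h⟩; subst h; rfl
    right_inv := fun y => rfl }
  rw [Fintype.card_congr (e1.trans e2), Fintype.card_fin]

end

lemma count_colorings {α β : Type*} [Fintype α] [Fintype β] [DecidableEq α] [DecidableEq β]
    {k d : ℕ} (hα : Fintype.card α = k) (hβ : Fintype.card β = k)
    {w : Fin d → ℕ} (c : α → Fin d) (hc : ∀ r, (univ.filter fun a => c a = r).card = w r) :
    (((univ.filter (fun c' : β → Fin d =>
        ∀ r, (univ.filter fun b => c' b = r).card = w r)).card : ℂ))
      * ∏ r, ((w r).factorial : ℂ) = (k.factorial : ℂ) := by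
  classical
  set Z : Matrix (Fin 1) (Fin 1) ℂ := fun _ _ => 1 with hZ
  set u : α → Fin 1 := fun _ => 0 with hu
  set v : β → Fin 1 := fun _ => 0 with hv
  have h1 : perAux Z u v = (k.factorial : ℂ) := by
    unfold perAux
    simp only [hZ, Finset.prod_const_one, Finset.sum_const, card_univ, nsmul_eq_mul, mul_one]
    rw [Fintype.card_equiv (Fintype.equivOfCardEq (hα.trans hβ.symm)), hα]
  have hfilter : (univ.filter (fun c' : β → Fin d =>
        ∀ r, (univ.filter fun b => c' b = r).card = (univ.filter fun a => c a = r).card))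
      = (univ.filter (fun c' : β → Fin d =>
        ∀ r, (univ.filter fun b => c' b = r).card = w r)) := by
    refine Finset.filter_congr fun c' _ => ?_
    simp only [hc]
  have h2 := perAux_split Z u v c
  rw [hfilter] at h2
  have h3 : ∀ c' ∈ (univ.filter (fun c' : β → Fin d =>
        ∀ r, (univ.filter fun b => c' b = r).card = w r)),
      (∏ r, perAux Z (fun j : {a // c a = r} => u j.1) (fun j : {b // c' b = r} => v j.1))
        = ∏ r, ((w r).factorial : ℂ) := by
    intro c' hc'
    rw [mem_filter] at hc'
    refine Finset.prod_congr rfl fun r _ => ?_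
    have hcard : Fintype.card {a // c a = r} = Fintype.card {b // c' b = r} := by
      rw [Fintype.card_subtype, Fintype.card_subtype, hc r, hc'.2 r]
    unfold perAux
    simp only [hZ, Finset.prod_const_one, Finset.sum_const, card_univ, nsmul_eq_mul, mul_one]
    rw [Fintype.card_equiv (Fintype.equivOfCardEq hcard), Fintype.card_subtype, hc r]
  rw [Finset.sum_congr rfl h3, Finset.sum_const, nsmul_eq_mul, h1] at h2
  exact h2.symm

theorem perSub_double_laplace {ι : Type*} [Fintype ι] [DecidableEq ι] (Z : Matrix ι ι ℂ)
    (J K : Finset ι) (k : ℕ) (hJ : J.card = k) (hK : K.card = k)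
    (d : ℕ) (hd : 1 ≤ d) (w : Fin d → ℕ) (hw : ∑ r, w r = k) :
    perSub Z J K =
      ((∏ r, ((w r).factorial : ℂ)) / (k.factorial : ℂ)) *
        ∑ V ∈ (Finset.univ : Finset (Fin d → Finset ι)).filter
            (fun V => (∀ r s, r ≠ s → Disjoint (V r) (V s)) ∧
              Finset.univ.biUnion V = J ∧ ∀ r, (V r).card = w r),
          ∑ W ∈ (Finset.univ : Finset (Fin d → Finset ι)).filter
              (fun W => (∀ r s, r ≠ s → Disjoint (W r) (W s)) ∧
                Finset.univ.biUnion W = K ∧ ∀ r, (W r).card = w r),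
            ∏ r, perSub Z (V r) (W r) := by
  classical
  have hcardJ : Fintype.card {x // x ∈ J} = k := by simp [Fintype.card_coe, hJ]
  have hcardK : Fintype.card {x // x ∈ K} = k := by simp [Fintype.card_coe, hK]
  obtain ⟨c₀, hc₀⟩ := exists_coloring {x // x ∈ K} k hcardK w hw
  rw [sum_partition hd J w]
  have hinner : ∀ c ∈ (univ : Finset ({x // x ∈ J} → Fin d)).filter
      (fun c => ∀ r, (univ.filter fun j => c j = r).card = w r),
      (∑ W ∈ (univ : Finset (Fin d → Finset ι)).filter
          (fun W => (∀ r s, r ≠ s → Disjoint (W r) (W s)) ∧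
            univ.biUnion W = K ∧ ∀ r, (W r).card = w r),
        ∏ r, perSub Z (toV J c r) (W r)) = perSub Z J K := by
    intro c hc
    rw [mem_filter] at hc
    rw [sum_partition hd K w]
    simp only [perSub_toV]
    rw [perSub_eq_perAux, perAux_split Z (Subtype.val : {x // x ∈ J} → ι)
      (Subtype.val : {x // x ∈ K} → ι) c]
    refine Finset.sum_congr ?_ fun _ _ => rfl
    refine Finset.filter_congr fun c' _ => ?_
    simp only [hc.2]
  rw [Finset.sum_congr rfl hinner, Finset.sum_const, nsmul_eq_mul]
  have hcount := count_colorings hcardK hcardJ c₀ hc₀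
  have hk0 : (k.factorial : ℂ) ≠ 0 := Nat.cast_ne_zero.2 (Nat.factorial_ne_zero k)
  rw [div_mul_eq_mul_div, eq_div_iff hk0]
  linear_combination (-(perSub Z J K)) * hcount
end

section
/- Let A be a finite set with |A| = n, let 0 ≤ j ≤ k ≤ n, and let g: {j-element subsets of A} → [0,∞) and h: {(k−j)-element subsets of A} → [0,∞). Define p(J) = Σ_{I ⊆ J, |I|=j} g(I)·h(J∖I) for each k-element subset J of A. Then (1/C(n,k)) Σ_{|J|=k} (p(J)/C(k,j))² ≤ ((1/C(n,j)) Σ_{|I|=j} g(I)²) · ((1/C(n,k−j)) Σ_{|J|=k−j} h(J)²). -/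
/-!
Induction on `A`. Pick `x ∈ A` and let `B = A \ {x}`. A `k`-set either avoids `x` or is
`insert x J`, and the convolution over `insert x J` splits according to whether `x` falls in `I` or
in the complement; both parts are convolutions over `B`, with `h` resp. `g` replaced by its shift
`K ↦ h (insert x K)` resp. `I ↦ g (insert x I)`. The induction hypothesis bounds the three sums of
squares over `B`, Cauchy–Schwarz bounds the cross term, and Pascal's rule reassembles the binomial
weights. What is left is a weighted AM–GM inequality in the four partial sums `G₀, G₁, H₀, H₁` of
`g²` and `h²` over sets avoiding resp. containing `x`.
-/

open Finset

lemma two_mul_le_add_of_mul_eq_sq {u v t : ℝ} (hu : 0 ≤ u) (hv : 0 ≤ v) (h : u * v = t ^ 2) :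
    2 * t ≤ u + v := by
  nlinarith [sq_nonneg (u - v), sq_nonneg (u + v - 2 * t)]

lemma two_mul_le_add_add_of_sq_le {x a b T u₁ v₁ u₂ v₂ : ℝ} (ha : 0 ≤ a) (hb : 0 ≤ b) (hT : 0 ≤ T)
    (hu₁ : 0 ≤ u₁) (hv₁ : 0 ≤ v₁) (hu₂ : 0 ≤ u₂) (hv₂ : 0 ≤ v₂)
    (h₁ : u₁ * v₁ = a ^ 2 * T) (h₂ : u₂ * v₂ = b ^ 2 * T) (hx : x ^ 2 ≤ (a + b) ^ 2 * T) :
    2 * x ≤ u₁ + v₁ + (u₂ + v₂) := by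
  have hsq : ∀ c, c ^ 2 * T = (c * √T) ^ 2 := fun c => by rw [mul_pow, Real.sq_sqrt hT]
  have hx' : x ≤ (a + b) * √T :=
    (abs_le_of_sq_le_sq (hsq (a + b) ▸ hx) (by positivity)).trans' (le_abs_self x)
  linarith [two_mul_le_add_of_mul_eq_sq hu₁ hv₁ (h₁.trans (hsq a)),
    two_mul_le_add_of_mul_eq_sq hu₂ hv₂ (h₂.trans (hsq b))]

lemma add_add_add_two_mul_le_add_mul_add {n j k G₀ G₁ H₀ H₁ s p q x : ℝ} (hj : 0 < j)
    (hjk : j < k) (hkn : k ≤ n) (hG₀ : 0 ≤ G₀) (hG₁ : 0 ≤ G₁) (hH₀ : 0 ≤ H₀) (hH₁ : 0 ≤ H₁)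
    (hq₀ : 0 ≤ q) (hs : (n - j) * (n - k + j) * s ≤ n * (n - k) * (G₀ * H₀))
    (hp : k * (n - k + j) * p ≤ n * j * (G₁ * H₀)) (hq : k * (n - j) * q ≤ n * (k - j) * (G₀ * H₁))
    (hx : x ^ 2 ≤ p * q) :
    s + p + q + 2 * x ≤ (G₀ + G₁) * (H₀ + H₁) := by
  have hk : 0 < k := hj.trans hjk
  have hn : 0 < n := hk.trans_le hkn
  have hkj : 0 < k - j := by linarith
  have hnk : 0 ≤ n - k := by linarith
  have hnj : 0 < n - j := by linarith
  have hnkj : 0 < n - k + j := by linarith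
  set D := k * (n - j) * (n - k + j)
  set T := j * (k - j) * (n - j) * (n - k + j) * (G₀ * G₁ * H₀ * H₁)
  have hpq := mul_le_mul hp hq (by positivity) (by positivity)
  have hDx : (D * x) ^ 2 ≤ (k + (n - k)) ^ 2 * T := by
    linear_combination D ^ 2 * hx + ((n - j) * (n - k + j)) * hpq
  -- AM–GM pairs `G₀H₀` with `G₁H₁` and `G₁H₀` with `G₀H₁`; the products of the weighted terms
  -- are `k² T` and `(n - k)² T`, and `k + (n - k)` is the `n` in `hDx`.
  have key := two_mul_le_add_add_of_sq_le (u₁ := k * j * (k - j) * (G₀ * H₀))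
    (v₁ := D * (G₁ * H₁)) (u₂ := (n - j) * (n - k) * (k - j) * (G₁ * H₀))
    (v₂ := j * (n - k) * (n - k + j) * (G₀ * H₁)) hk.le hnk (by positivity)
    (by positivity) (by positivity) (by positivity) (by positivity) (by ring) (by ring) hDx
  refine le_of_mul_le_mul_left ?_ (by positivity : 0 < D)
  linear_combination k * hs + (n - j) * hp + (n - k + j) * hq + key

lemma mul_mul_le_of_ratios {ν μ α β γ δ a b c d a' b' c' d' S R : ℝ}
    (ha : ν * a' = α * a) (hb : ν * b' = β * b) (hc : ν * c' = γ * c) (hd : μ * d' = δ * d)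
    (h : a' * b' * S ≤ c' * d' ^ 2 * R) :
    μ ^ 2 * α * β * (a * b * S) ≤ ν * γ * δ ^ 2 * (c * d ^ 2 * R) := by
  linear_combination (ν ^ 2 * μ ^ 2) * h - (μ ^ 2 * S * ν * b') * ha - (μ ^ 2 * S * α * a) * hb
    + (ν * R * (μ * d') ^ 2) * hc + (ν * R * γ * c * (μ * d' + δ * d)) * hd

lemma add_one_mul_cast_choose (n k : ℕ) :
    ((n : ℝ) + 1) * n.choose k = (k + 1) * (n + 1).choose (k + 1) := by
  rw [mul_comm (k + 1 : ℝ)]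
  exact_mod_cast Nat.add_one_mul_choose_eq n k

lemma add_one_mul_cast_choose_of_le {n k : ℕ} (h : k ≤ n + 1) :
    ((n : ℝ) + 1) * n.choose k = (n + 1 - k) * (n + 1).choose k := by
  have := congrArg (Nat.cast : ℕ → ℝ) (Nat.choose_mul_succ_eq n k)
  push_cast [Nat.cast_sub h] at this
  linear_combination this

lemma succ_choose_mul_choose_mul_le {m j k : ℕ} (hjk : j < k) (hkm : k ≤ m)
    {S P Q X G₀ G₁ H₀ H₁ : ℝ} (hG₀ : 0 ≤ G₀) (hG₁ : 0 ≤ G₁) (hH₀ : 0 ≤ H₀) (hH₁ : 0 ≤ H₁)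
    (hQ₀ : 0 ≤ Q) (hX : X ^ 2 ≤ Q * P)
    (hS : (m.choose (j + 1) : ℝ) * m.choose (k - j) * S
      ≤ m.choose (k + 1) * (k + 1).choose (j + 1) ^ 2 * (G₀ * H₀))
    (hP : (m.choose j : ℝ) * m.choose (k - j) * P ≤ m.choose k * k.choose j ^ 2 * (G₁ * H₀))
    (hQ : (m.choose (j + 1) : ℝ) * m.choose (k - (j + 1)) * Q
      ≤ m.choose k * k.choose (j + 1) ^ 2 * (G₀ * H₁)) :
    ((m + 1).choose (j + 1) : ℝ) * (m + 1).choose (k - j) * (S + (Q + P + 2 * X))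
      ≤ (m + 1).choose (k + 1) * (k + 1).choose (j + 1) ^ 2 * ((G₀ + G₁) * (H₀ + H₁)) := by
  have ha₀ := add_one_mul_cast_choose_of_le (n := m) (k := j + 1) (by omega)
  have hb₀ := add_one_mul_cast_choose_of_le (n := m) (k := k - j) (by omega)
  have hc₀ := add_one_mul_cast_choose_of_le (n := m) (k := k + 1) (by omega)
  have hd₀ := add_one_mul_cast_choose_of_le (n := k) (k := j + 1) (by omega)
  have hb₁ := add_one_mul_cast_choose m (k - (j + 1))
  rw [show k - (j + 1) + 1 = k - j by omega] at hb₁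
  have hS' := mul_mul_le_of_ratios (μ := 1) (δ := 1) ha₀ hb₀ hc₀ rfl hS
  have hP' := mul_mul_le_of_ratios (add_one_mul_cast_choose m j) hb₀ (add_one_mul_cast_choose m k)
    (add_one_mul_cast_choose k j) hP
  have hQ' := mul_mul_le_of_ratios ha₀ hb₁ (add_one_mul_cast_choose m k) hd₀ hQ
  push_cast [Nat.cast_sub hjk.le, Nat.cast_sub (Nat.succ_le_of_lt hjk)] at hS' hP' hQ'
  have hJ : (0 : ℝ) < j + 1 := by positivity
  have hJK : (j : ℝ) + 1 < k + 1 := by exact_mod_cast Nat.succ_lt_succ hjk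
  have hKn : (k : ℝ) + 1 ≤ m + 1 := by exact_mod_cast Nat.succ_le_succ hkm
  set a : ℝ := (m + 1).choose (j + 1) * (m + 1).choose (k - j)
  set c : ℝ := (m + 1).choose (k + 1) * (k + 1).choose (j + 1) ^ 2
  have hc : 0 ≤ c := by positivity
  have key := add_add_add_two_mul_le_add_mul_add (s := a * S) (p := a * P) (q := a * Q) (x := a * X)
    hJ hJK hKn (mul_nonneg hc hG₀) (mul_nonneg hc hG₁) hH₀ hH₁ (by positivity)
    (by linear_combination hS')
    (le_of_mul_le_mul_left (by linear_combination hP')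
      (by positivity : (0 : ℝ) < (k + 1) * (j + 1)))
    (le_of_mul_le_mul_left (by linear_combination hQ')
      (mul_pos (hJ.trans hJK) (sub_pos.2 hJK) : (0 : ℝ) < (k + 1) * (k + 1 - (j + 1))))
    (by linear_combination mul_le_mul_of_nonneg_left hX (sq_nonneg a))
  linear_combination key

section

variable {α : Type*} [DecidableEq α]

@[to_additive]
lemma Finset.prod_powersetCard_succ_insert {β : Type*} [CommMonoid β] {x : α} {s : Finset α}
    (hx : x ∉ s) (r : ℕ) (f : Finset α → β) :
    ∏ t ∈ (insert x s).powersetCard (r + 1), f t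
      = (∏ t ∈ s.powersetCard (r + 1), f t) * ∏ t ∈ s.powersetCard r, f (insert x t) := by
  have hxt : ∀ t ∈ s.powersetCard r, x ∉ t := fun t ht hxt => hx ((mem_powersetCard.1 ht).1 hxt)
  rw [powersetCard_succ_insert hx, prod_union, prod_image]
  · exact fun t ht u hu htu => by
      rw [← erase_insert (hxt t ht), ← erase_insert (hxt u hu), htu]
  · exact disjoint_left.2 fun t ht ht' => by
      obtain ⟨u, -, rfl⟩ := mem_image.1 ht'
      exact hx ((mem_powersetCard.1 ht).1 (mem_insert_self x u))

section SubsetConv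

variable {R : Type*} [NonUnitalNonAssocSemiring R]

def subsetConv (j : ℕ) (g h : Finset α → R) (J : Finset α) : R :=
  ∑ I ∈ J.powersetCard j, g I * h (J \ I)

@[simp]
lemma subsetConv_zero (g h : Finset α → R) (J : Finset α) : subsetConv 0 g h J = g ∅ * h J := by
  simp [subsetConv]

lemma subsetConv_of_card_eq {j : ℕ} (g h : Finset α → R) {J : Finset α} (hJ : #J = j) :
    subsetConv j g h J = g J * h ∅ := by
  simp [subsetConv, ← hJ]

lemma subsetConv_of_card_lt {j : ℕ} (g h : Finset α → R) {J : Finset α} (hJ : #J < j) :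
    subsetConv j g h J = 0 := by
  simp [subsetConv, powersetCard_eq_empty.2 hJ]

lemma subsetConv_insert (j : ℕ) (g h : Finset α → R) {x : α} {J : Finset α} (hx : x ∉ J) :
    subsetConv (j + 1) g h (insert x J)
      = subsetConv (j + 1) g (fun K => h (insert x K)) J
        + subsetConv j (fun I => g (insert x I)) h J := by
  rw [subsetConv, sum_powersetCard_succ_insert hx]
  congr 1 <;> refine sum_congr rfl fun I hI => ?_
  · rw [insert_sdiff_of_notMem _ fun hxI => hx ((mem_powersetCard.1 hI).1 hxI)]
  · rw [insert_sdiff_insert, sdiff_insert, erase_eq_of_notMem fun hxJI => hx (mem_sdiff.1 hxJI).1]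

end SubsetConv

-- Clearing the binomial denominators makes the degenerate cases `k < j` and `#A < k` trivial.
def SubsetConvBound (A : Finset α) (j k : ℕ) (g h : Finset α → ℝ) : Prop :=
  ((#A).choose j : ℝ) * (#A).choose (k - j) * ∑ J ∈ A.powersetCard k, subsetConv j g h J ^ 2
    ≤ (#A).choose k * k.choose j ^ 2
      * ((∑ I ∈ A.powersetCard j, g I ^ 2) * ∑ K ∈ A.powersetCard (k - j), h K ^ 2)

namespace SubsetConvBound

variable {A : Finset α} {j k : ℕ} {g h : Finset α → ℝ}

lemma zero_left (A : Finset α) (k : ℕ) (g h : Finset α → ℝ) : SubsetConvBound A 0 k g h := by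
  simp [SubsetConvBound, mul_pow, mul_sum]

lemma self (A : Finset α) (k : ℕ) (g h : Finset α → ℝ) : SubsetConvBound A k k g h := by
  rw [SubsetConvBound, sum_congr rfl fun J hJ =>
    by rw [subsetConv_of_card_eq g h (mem_powersetCard.1 hJ).2]]
  simp [mul_pow, sum_mul]

lemma of_lt (hkj : k < j) : SubsetConvBound A j k g h := by
  rw [SubsetConvBound, sum_eq_zero fun J hJ =>
    by rw [subsetConv_of_card_lt g h ((mem_powersetCard.1 hJ).2 ▸ hkj), zero_pow two_ne_zero]]
  rw [mul_zero]
  positivity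

lemma of_card_lt (hAk : #A < k) : SubsetConvBound A j k g h := by
  rw [SubsetConvBound, powersetCard_eq_empty.2 hAk, sum_empty, mul_zero]
  positivity

lemma insert_succ_succ {x : α} {B : Finset α} (hx : x ∉ B) (hjk : j < k) (hkB : k ≤ #B)
    (ih : ∀ j k g h, SubsetConvBound B j k g h) :
    SubsetConvBound (insert x B) (j + 1) (k + 1) g h := by
  have hr : k - j = k - (j + 1) + 1 := by omega
  have hS := ih (j + 1) (k + 1) g h
  have hP := ih j k (fun I => g (insert x I)) h
  have hQ := ih (j + 1) k g (fun K => h (insert x K))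
  rw [SubsetConvBound, Nat.add_sub_add_right] at hS ⊢
  -- the last split needs `k - j` written as a successor
  rw [card_insert_of_notMem hx, sum_powersetCard_succ_insert hx, sum_powersetCard_succ_insert hx,
    hr, sum_powersetCard_succ_insert hx, ← hr]
  have hsplit : ∑ J ∈ B.powersetCard k, subsetConv (j + 1) g h (insert x J) ^ 2
      = ∑ J ∈ B.powersetCard k, subsetConv (j + 1) g (fun K => h (insert x K)) J ^ 2
        + ∑ J ∈ B.powersetCard k, subsetConv j (fun I => g (insert x I)) h J ^ 2
        + 2 * ∑ J ∈ B.powersetCard k, subsetConv (j + 1) g (fun K => h (insert x K)) J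
            * subsetConv j (fun I => g (insert x I)) h J := by
    rw [mul_sum, ← sum_add_distrib, ← sum_add_distrib]
    refine sum_congr rfl fun J hJ => ?_
    rw [subsetConv_insert j g h fun hxJ => hx ((mem_powersetCard.1 hJ).1 hxJ)]
    ring
  rw [hsplit]
  exact succ_choose_mul_choose_mul_le hjk hkB (by positivity) (by positivity) (by positivity)
    (by positivity) (by positivity) (sum_mul_sq_le_sq_mul_sq _ _ _) hS hP hQ

end SubsetConvBound

theorem subsetConvBound (A : Finset α) (j k : ℕ) (g h : Finset α → ℝ) :
    SubsetConvBound A j k g h := by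
  induction A using Finset.induction_on generalizing j k g h with
  | empty =>
    rcases j.eq_zero_or_pos with rfl | hj
    · exact .zero_left _ _ _ _
    rcases lt_or_ge k j with hkj | hjk
    · exact .of_lt hkj
    · exact .of_card_lt (by rw [card_empty]; omega)
  | insert x B hx ih =>
    rcases j with _ | j
    · exact .zero_left _ _ _ _
    rcases lt_or_ge k (j + 1) with hkj | hjk
    · exact .of_lt hkj
    rcases lt_or_ge #(insert x B) k with hAk | hkA
    · exact .of_card_lt hAk
    rcases hjk.eq_or_lt with rfl | hjk
    · exact .self _ _ _ _
    obtain ⟨k, rfl⟩ : ∃ k', k = k' + 1 := ⟨k - 1, by omega⟩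
    rw [card_insert_of_notMem hx] at hkA
    exact .insert_succ_succ hx (by omega) (by omega) ih

end

theorem subset_convolution_inequality_general {α : Type*} [DecidableEq α]
    (A : Finset α) (n j k : ℕ) (hA : A.card = n)
    (g h : Finset α → ℝ) :
    (1 / (n.choose k) : ℝ) *
        ∑ J ∈ Finset.powersetCard k A,
          ((∑ I ∈ Finset.powersetCard j J, g I * h (J \ I)) / (k.choose j)) ^ 2
      ≤ ((1 / (n.choose j) : ℝ) * ∑ I ∈ Finset.powersetCard j A, g I ^ 2) *
        ((1 / (n.choose (k - j)) : ℝ) * ∑ J ∈ Finset.powersetCard (k - j) A, h J ^ 2) := by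
  have hbound := subsetConvBound A j k g h
  rw [SubsetConvBound, hA] at hbound
  set S := ∑ J ∈ A.powersetCard k, subsetConv j g h J ^ 2
  set G := ∑ I ∈ A.powersetCard j, g I ^ 2
  set H := ∑ K ∈ A.powersetCard (k - j), h K ^ 2
  calc _ = S / (n.choose k * k.choose j ^ 2) := by
        simp only [S, subsetConv, div_pow, ← sum_div]; ring
    _ ≤ G * H / (n.choose j * n.choose (k - j)) := ?_
    _ = _ := by ring
  rcases (show (0 : ℝ) ≤ n.choose k * k.choose j ^ 2 by positivity).eq_or_lt with hzero | hpos
  · rw [← hzero, div_zero]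
    positivity
  have hkn : k ≤ n := Nat.choose_ne_zero_iff.1 fun h0 => hpos.ne' (by rw [h0]; simp)
  have hjk : j ≤ k := Nat.choose_ne_zero_iff.1 fun h0 => hpos.ne' (by rw [h0]; simp)
  have ha : (0 : ℝ) < n.choose j := by exact_mod_cast Nat.choose_pos (hjk.trans hkn)
  have hb : (0 : ℝ) < n.choose (k - j) := by exact_mod_cast Nat.choose_pos (by omega)
  rw [div_le_div_iff₀ hpos (by positivity)]
  linarith

theorem subset_convolution_inequality {α : Type*} [DecidableEq α]
    (A : Finset α) (n j k : ℕ) (hA : A.card = n) (hjk : j ≤ k) (hkn : k ≤ n)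
    (g h : Finset α → ℝ)
    (hg : ∀ I ∈ Finset.powersetCard j A, 0 ≤ g I)
    (hh : ∀ J ∈ Finset.powersetCard (k - j) A, 0 ≤ h J) :
    (1 / (n.choose k) : ℝ) *
        ∑ J ∈ Finset.powersetCard k A,
          ((∑ I ∈ Finset.powersetCard j J, g I * h (J \ I)) / (k.choose j)) ^ 2
      ≤ ((1 / (n.choose j) : ℝ) * ∑ I ∈ Finset.powersetCard j A, g I ^ 2) *
        ((1 / (n.choose (k - j)) : ℝ) * ∑ J ∈ Finset.powersetCard (k - j) A, h J ^ 2) :=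
  subset_convolution_inequality_general A n j k hA g h
end

section
/- Let n ≥ 1 and ℓ ∈ {1,…,n}. Then per(D_{n,ℓ}) = Σ_{j=0}^{ℓ} (−2)^j · C(ℓ,j) · (n−j)!, where D_{n,ℓ} is the n×n matrix whose entry at (i,j) is −1 if i = j ≤ ℓ and 1 otherwise. -/
/-- The permanent of a square matrix. -/
def perm {n : ℕ} {R : Type*} [CommRing R] (Z : Matrix (Fin n) (Fin n) R) : R :=
  ∑ σ : Equiv.Perm (Fin n), ∏ j, Z j (σ j)

lemma card_fixing {n : ℕ} (t : Finset (Fin n)) :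
    (Finset.univ.filter (fun σ : Equiv.Perm (Fin n) => ∀ i ∈ t, σ i = i)).card
      = (n - t.card).factorial := by
  classical
  rw [← Fintype.card_subtype]
  have e1 : {σ : Equiv.Perm (Fin n) // ∀ i ∈ t, σ i = i}
      ≃ (((↑t : Set (Fin n))ᶜ : Set (Fin n)) ≃ ((↑t : Set (Fin n))ᶜ : Set (Fin n))) := by
    refine (Equiv.subtypeEquivRight ?_).trans (Equiv.Set.compl (Equiv.refl (↑t : Set (Fin n))))
    intro σ
    constructor
    · intro h x; exact h x (by simpa using x.2)
    · intro h i hi; exact h ⟨i, by simpa using hi⟩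
  rw [Fintype.card_congr e1, Fintype.card_equiv (Equiv.refl _), Fintype.card_compl_set]
  simp

theorem perm_D_eq {n : ℕ} (hn : 1 ≤ n) (ℓ : ℕ) (hℓ : 1 ≤ ℓ) (hℓn : ℓ ≤ n) :
    perm (Matrix.of fun i j : Fin n => if i = j ∧ (i : ℕ) < ℓ then (-1 : ℤ) else 1)
      = ∑ j ∈ Finset.range (ℓ + 1),
          (-2) ^ j * (ℓ.choose j : ℤ) * ((n - j).factorial : ℤ) := by
  classical
  set L : Finset (Fin n) := Finset.univ.filter (fun i => (i : ℕ) < ℓ) with hL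
  have hLcard : L.card = ℓ := by
    apply Finset.card_eq_of_bijective (fun i h => ⟨i, lt_of_lt_of_le h hℓn⟩)
    · intro a ha
      rw [hL, Finset.mem_filter] at ha
      exact ⟨a, ha.2, by ext; rfl⟩
    · intro i h
      simp [hL, h]
    · intro i j hi hj hij
      simpa using congrArg (fun x : Fin n => (x : ℕ)) hij
  have hprod : ∀ σ : Equiv.Perm (Fin n),
      (∏ j, (Matrix.of fun i j : Fin n =>
          if i = j ∧ (i : ℕ) < ℓ then (-1 : ℤ) else 1) j (σ j))
        = ∑ t ∈ (Finset.univ : Finset (Fin n)).powerset,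
            if (∀ i ∈ t, i = σ i ∧ (i : ℕ) < ℓ) then (-2 : ℤ) ^ t.card else 0 := by
    intro σ
    have hE : ∀ j : Fin n, (Matrix.of fun i j : Fin n =>
        if i = j ∧ (i : ℕ) < ℓ then (-1 : ℤ) else 1) j (σ j)
        = (if j = σ j ∧ (j : ℕ) < ℓ then (-2 : ℤ) else 0) + 1 := by
      intro j; simp only [Matrix.of_apply]; split_ifs <;> norm_num
    rw [Finset.prod_congr rfl (fun j _ => hE j), Finset.prod_add]
    refine Finset.sum_congr rfl fun t _ => ?_
    rw [Finset.prod_const_one, mul_one, Finset.prod_ite_zero, Finset.prod_const]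
    congr 1
  rw [perm]
  rw [Finset.sum_congr rfl (fun σ _ => hprod σ), Finset.sum_comm]
  have hinner : ∀ t ∈ (Finset.univ : Finset (Fin n)).powerset,
      (∑ σ : Equiv.Perm (Fin n),
          if (∀ i ∈ t, i = σ i ∧ (i : ℕ) < ℓ) then (-2 : ℤ) ^ t.card else 0)
        = if t ⊆ L then (-2 : ℤ) ^ t.card * ((n - t.card).factorial : ℤ) else 0 := by
    intro t _
    by_cases htL : t ⊆ L
    · rw [if_pos htL]
      have hiff : ∀ σ : Equiv.Perm (Fin n),
          (∀ i ∈ t, i = σ i ∧ (i : ℕ) < ℓ) ↔ (∀ i ∈ t, σ i = i) := by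
        intro σ
        constructor
        · intro h i hi; exact (h i hi).1.symm
        · intro h i hi
          refine ⟨(h i hi).symm, ?_⟩
          have := htL hi
          rw [hL, Finset.mem_filter] at this
          exact this.2
      simp only [hiff]
      rw [Finset.sum_ite, Finset.sum_const, Finset.sum_const_zero, add_zero,
        card_fixing, nsmul_eq_mul, mul_comm]
    · rw [if_neg htL]
      refine Finset.sum_eq_zero fun σ _ => ?_
      rw [if_neg]
      intro h
      exact htL fun i hi => by
        rw [hL, Finset.mem_filter]; exact ⟨Finset.mem_univ i, (h i hi).2⟩
  rw [Finset.sum_congr rfl hinner, Finset.sum_ite, Finset.sum_const_zero, add_zero]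
  have hfilter : (Finset.univ : Finset (Fin n)).powerset.filter (· ⊆ L) = L.powerset := by
    ext t; simp [Finset.mem_powerset]
  rw [hfilter]
  rw [Finset.sum_powerset_apply_card (fun m => (-2 : ℤ) ^ m * ((n - m).factorial : ℤ)), hLcard]
  refine Finset.sum_congr rfl fun j _ => ?_
  rw [nsmul_eq_mul]
  ring
end
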